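/- Assume (A2), (A4) and (A5), and for s > 0 and n ≥ 1 let T_n(s) = Σ_{σ∈𝒮_n} ℰ_r(σ)^s. Then for every s > 0 there exist positive numbers g₁(s) and g₂(s) such that for every pair n, l ∈ ℕ one has g₁(s)·T_n(s)·T_l(s) ≤ T_{n+l}(s) ≤ g₂(s)·T_n(s)·T_l(s). -/

import Mathlib

/-!
Under (A4) a `Ψ`-word with one admissible lift has all of its lifts admissible, so `𝒮*` is the set
of nonempty admissible `Ψ`-words and `μ(J_σ)` is a sum over all `2^|σ|` lifts of `σ`. All weights
`χ_i`, `p_{ij}`, `s_{ij}` that occur lie in `[c, 1]` for one `c > 0`, which makes `ℰ_r`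
quasi-multiplicative: `c^{1+r} ℰ_r(u) ℰ_r(v) ≤ ℰ_r(uv) ≤ c⁻¹ ℰ_r(u) ℰ_r(v)` (with `ℰ_r(∅) = 1`
this holds also for empty words). Cutting the words of `𝒮_{n+l}` after `n` letters gives the upper
bound. For the lower bound, (A5) provides a connecting word of length at most `M` between any two
letters; joining `α ∈ 𝒮_n` to `β ∈ 𝒮_l` through it and truncating to length `n + l` costs a bounded
factor, and a word of `𝒮_{n+l}` arises in this way from at most as many pairs `(α, β)` as there
are `Ψ`-words of length at most `M`.
-/

open scoped Classical ENNReal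
open Filter MeasureTheory

noncomputable section

namespace MTM

/-- the edge relation of the directed graph `𝒢`: `(i,j) ∈ G₂ ↔ p i j > 0`. -/
def edge (p : ℕ → ℕ → ℝ) (i j : ℕ) : Prop := 0 < p i j

/-- product of transition weights along a word. -/
def pword (p : ℕ → ℕ → ℝ) : List ℕ → ℝ
  | [] => 1
  | [_] => 1
  | a :: b :: t => p a b * pword p (b :: t)

/-- product of contraction ratios along a word. -/
def sword (sr : ℕ → ℕ → ℝ) : List ℕ → ℝ
  | [] => 1
  | [_] => 1
  | a :: b :: t => sr a b * sword sr (b :: t)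

/-- `𝒯(σ)`: all lifts of a word, each letter `i` may be replaced by `i + N`. -/
def lifts (N : ℕ) : List ℕ → Finset (List ℕ)
  | [] => {[]}
  | i :: t => (lifts N t).biUnion fun l => {i :: l, (i + N) :: l}

/-- `Γ(σ) = G_n ∩ 𝒯(σ)`. -/
def Gam (p : ℕ → ℕ → ℝ) (N : ℕ) (σ : List ℕ) : Finset (List ℕ) :=
  (lifts N σ).filter fun τ => τ.Chain' (edge p)

/-- words over the alphabet `Ψ = {1,…,N}`. -/
def isPsiWord (N : ℕ) (σ : List ℕ) : Prop :=
  σ ≠ [] ∧ ∀ x ∈ σ, x ∈ Finset.Icc 1 N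

/-- `σ ∈ 𝒮_*`: a `Ψ`-word having at least one admissible lift. -/
def isSword (p : ℕ → ℕ → ℝ) (N : ℕ) (σ : List ℕ) : Prop :=
  isPsiWord N σ ∧ (Gam p N σ).Nonempty

/-- `σ ∈ G_*`: admissible words over `Ω = {1,…,2N}`. -/
def isGword (p : ℕ → ℕ → ℝ) (N : ℕ) (σ : List ℕ) : Prop :=
  σ ≠ [] ∧ (∀ x ∈ σ, x ∈ Finset.Icc 1 (2 * N)) ∧ σ.Chain' (edge p)

/-- `σ ∈ H₁^*`: admissible words with all letters in `Ψ`. -/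
def isH1word (p : ℕ → ℕ → ℝ) (N : ℕ) (σ : List ℕ) : Prop :=
  σ ≠ [] ∧ (∀ x ∈ σ, x ∈ Finset.Icc 1 N) ∧ σ.Chain' (edge p)

/-- `σ ∈ H₂^*`: admissible words with all letters in `Υ = {N+1,…,2N}`. -/
def isH2word (p : ℕ → ℕ → ℝ) (N : ℕ) (σ : List ℕ) : Prop :=
  σ ≠ [] ∧ (∀ x ∈ σ, x ∈ Finset.Icc (N + 1) (2 * N)) ∧ σ.Chain' (edge p)

/-- `μ(J_σ) = Σ_{σ̃ ∈ Γ(σ)} χ_{σ̃₁} p_{σ̃}`. -/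
def muJ (p : ℕ → ℕ → ℝ) (χ : ℕ → ℝ) (N : ℕ) (σ : List ℕ) : ℝ :=
  ∑ τ ∈ Gam p N σ, χ (τ.headD 0) * pword p τ

/-- `ℰ_r(σ) = μ(J_σ) s_σ^r`, with `ℰ_r(θ) = 1` for the empty word. -/
def Er (p : ℕ → ℕ → ℝ) (χ : ℕ → ℝ) (sr : ℕ → ℕ → ℝ) (N : ℕ) (r : ℝ) (σ : List ℕ) : ℝ :=
  if σ = [] then 1 else muJ p χ N σ * sword sr σ ^ r

/-- `I_{1,σ}` resp. `I_{2,σ}`: the part of `μ(J_σ)` coming from lifts ending with `i`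
(resp. with `i⁺`, when applied with `i + N`). -/
def Ipart (p : ℕ → ℕ → ℝ) (χ : ℕ → ℝ) (N : ℕ) (i : ℕ) (σ : List ℕ) : ℝ :=
  ∑ τ ∈ (Gam p N σ).filter (fun τ => τ.getLastD 0 = i), χ (τ.headD 0) * pword p τ

/-- all words of a given length over a finite alphabet. -/
def wordsOfLen (S : Finset ℕ) : ℕ → Finset (List ℕ)
  | 0 => {[]}
  | n + 1 => (wordsOfLen S n).biUnion fun l => S.image fun a => a :: l

/-- `𝒮_n` as a finite set of words. -/
def Sn (p : ℕ → ℕ → ℝ) (N n : ℕ) : Finset (List ℕ) :=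
  (wordsOfLen (Finset.Icc 1 N) n).filter (isSword p N)

/-- irreducibility of the sub-matrix of `p` indexed by `S`: the corresponding directed
graph is strongly connected. -/
def irreducibleOn (p : ℕ → ℕ → ℝ) (S : Finset ℕ) : Prop :=
  ∀ i ∈ S, ∀ j ∈ S, ∃ c : List ℕ, (∀ x ∈ c, x ∈ S) ∧ List.Chain (edge p) i (c ++ [j])

/-- Assumption (A1): `P₁, P₂` irreducible and `P₄ = 0`. -/
def A1 (p : ℕ → ℕ → ℝ) (N : ℕ) : Prop :=
  irreducibleOn p (Finset.Icc 1 N) ∧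
    irreducibleOn (fun a b => p (a + N) (b + N)) (Finset.Icc 1 N) ∧
    ∀ i ∈ Finset.Icc 1 N, ∀ j ∈ Finset.Icc 1 N, p (i + N) j = 0

/-- Assumption (A2). -/
def A2 (p : ℕ → ℕ → ℝ) (N : ℕ) : Prop :=
  ∀ i ∈ Finset.Icc 1 N,
    2 ≤ ((Finset.Icc 1 N).filter fun j => 0 < p i j).card ∧
      2 ≤ ((Finset.Icc 1 N).filter fun j => 0 < p (i + N) (j + N)).card

/-- Assumption (A3): `ℳ_{i,j} = ∅` or `ℳ_{i,j} = {(i,j),(i,j⁺),(i⁺,j⁺)}`. -/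
def A3 (p : ℕ → ℕ → ℝ) (N : ℕ) : Prop :=
  ∀ i ∈ Finset.Icc 1 N, ∀ j ∈ Finset.Icc 1 N,
    (p i j = 0 ∧ p i (j + N) = 0 ∧ p (i + N) j = 0 ∧ p (i + N) (j + N) = 0) ∨
      (0 < p i j ∧ 0 < p i (j + N) ∧ p (i + N) j = 0 ∧ 0 < p (i + N) (j + N))

/-- Assumption (A4): `ℳ_{i,j} = ∅` or `ℳ_{i,j} = 𝒩_{i,j}`. -/
def A4 (p : ℕ → ℕ → ℝ) (N : ℕ) : Prop :=
  ∀ i ∈ Finset.Icc 1 N, ∀ j ∈ Finset.Icc 1 N,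
    (p i j = 0 ∧ p i (j + N) = 0 ∧ p (i + N) j = 0 ∧ p (i + N) (j + N) = 0) ∨
      (0 < p i j ∧ 0 < p i (j + N) ∧ 0 < p (i + N) j ∧ 0 < p (i + N) (j + N))

/-- Assumption (A5): `P₁` is irreducible. -/
def A5 (p : ℕ → ℕ → ℝ) (N : ℕ) : Prop := irreducibleOn p (Finset.Icc 1 N)

/-- `T_σ = T_{σ₁σ₂} ∘ ⋯ ∘ T_{σ_{n-1}σ_n}` (identity for words of length `≤ 1`). -/
def Tword {E : Type*} (T : ℕ → ℕ → E → E) : List ℕ → E → E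
  | [], x => x
  | [_], x => x
  | a :: b :: t, x => T a b (Tword T (b :: t) x)

/-- the cylinder set `J_σ = T_σ (J_{σ_n})`. -/
def Jword {E : Type*} (T : ℕ → ℕ → E → E) (J : ℕ → Set E) (σ : List ℕ) : Set E :=
  Tword T σ '' J (σ.getLastD 0)

/-- the Mauldin–Williams fractal `K = ⋂_k ⋃_{σ ∈ G_k} J_σ`. -/
def attractor {E : Type*} (p : ℕ → ℕ → ℝ) (N : ℕ) (T : ℕ → ℕ → E → E) (J : ℕ → Set E) :
    Set E :=
  ⋂ n : ℕ, ⋃ σ ∈ {σ : List ℕ | isGword p N σ ∧ σ.length = n + 1}, Jword T J σ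

/-- `μ` is reducible: `μ = ν₁ ∘ π₁⁻¹` for the Markov-type measure `ν₁` associated with some
`N × N` row-stochastic matrix and positive probability vector; equivalently, the cylinder
values of `μ` are of Markov type. -/
def reducible {E : Type*} [MeasurableSpace E] (p : ℕ → ℕ → ℝ) (N : ℕ)
    (T : ℕ → ℕ → E → E) (J : ℕ → Set E) (μ : Measure E) : Prop :=
  ∃ (pt : ℕ → ℕ → ℝ) (χt : ℕ → ℝ),
    (∀ i ∈ Finset.Icc 1 N, ∀ j ∈ Finset.Icc 1 N, 0 ≤ pt i j) ∧
      (∀ i ∈ Finset.Icc 1 N, ∑ j ∈ Finset.Icc 1 N, pt i j = 1) ∧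
      (∀ i ∈ Finset.Icc 1 N, 0 < χt i) ∧
      (∑ i ∈ Finset.Icc 1 N, χt i = 1) ∧
      ∀ σ : List ℕ, isSword p N σ →
        μ (Jword T J σ) = ENNReal.ofReal (χt (σ.headD 0) * pword pt σ)

/-- `e^r_{k,r}(μ)`: the `k`-th quantization error of order `r`, to the `r`-th power. -/
def quantErr {E : Type*} [PseudoMetricSpace E] [MeasurableSpace E] (r : ℝ) (μ : Measure E)
    (k : ℕ) : ℝ :=
  sInf ((fun α : Set E => ∫ x, Metric.infDist x α ^ r ∂μ) ''
    {α : Set E | α.Nonempty ∧ α.Finite ∧ α.ncard ≤ k})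

/-- the upper quantization coefficient `Q̄_r^s(μ) = limsup_k k^{r/s} e^r_{k,r}(μ)`. -/
def upperQC {E : Type*} [PseudoMetricSpace E] [MeasurableSpace E] (r s : ℝ)
    (μ : Measure E) : ℝ≥0∞ :=
  limsup (fun k : ℕ => ENNReal.ofReal ((k : ℝ) ^ (r / s) * quantErr r μ k)) atTop

/-- the lower quantization coefficient `Q̲_r^s(μ)`. -/
def lowerQC {E : Type*} [PseudoMetricSpace E] [MeasurableSpace E] (r s : ℝ)
    (μ : Measure E) : ℝ≥0∞ :=
  liminf (fun k : ℕ => ENNReal.ofReal ((k : ℝ) ^ (r / s) * quantErr r μ k)) atTop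

/-- the upper quantization dimension `D̄_r(μ) = limsup_k log k / (-log e_{k,r}(μ))`. -/
def upperQD {E : Type*} [PseudoMetricSpace E] [MeasurableSpace E] (r : ℝ)
    (μ : Measure E) : ℝ :=
  limsup (fun k : ℕ => Real.log k / (-Real.log (quantErr r μ k ^ (1 / r)))) atTop

/-- the lower quantization dimension `D̲_r(μ)`. -/
def lowerQD {E : Type*} [PseudoMetricSpace E] [MeasurableSpace E] (r : ℝ)
    (μ : Measure E) : ℝ :=
  liminf (fun k : ℕ => Real.log k / (-Real.log (quantErr r μ k ^ (1 / r)))) atTop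

/-- spectral radius of a real matrix: the largest modulus of a complex eigenvalue. -/
def specRad {n : Type*} [Fintype n] [DecidableEq n] (M : Matrix n n ℝ) : ℝ :=
  sSup (norm '' spectrum ℂ (M.map (algebraMap ℝ ℂ)))

/-- `A₁(s) = ((p_{i,j} s_{i,j}^r)^s)_{i,j=1}^N`. -/
def matA1 (p sr : ℕ → ℕ → ℝ) (N : ℕ) (r s : ℝ) : Matrix (Fin N) (Fin N) ℝ :=
  Matrix.of fun i j => (p (i.1 + 1) (j.1 + 1) * sr (i.1 + 1) (j.1 + 1) ^ r) ^ s

/-- `A₂(s) = ((p_{i⁺,j⁺} s_{i⁺,j⁺}^r)^s)_{i,j=1}^N`. -/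
def matA2 (p sr : ℕ → ℕ → ℝ) (N : ℕ) (r s : ℝ) : Matrix (Fin N) (Fin N) ℝ :=
  Matrix.of fun i j => (p (i.1 + 1 + N) (j.1 + 1 + N) * sr (i.1 + 1 + N) (j.1 + 1 + N) ^ r) ^ s

/-- `A₃(s) = ((p_{i,j⁺} s_{i,j⁺}^r)^s)_{i,j=1}^N`. -/
def matA3 (p sr : ℕ → ℕ → ℝ) (N : ℕ) (r s : ℝ) : Matrix (Fin N) (Fin N) ℝ :=
  Matrix.of fun i j => (p (i.1 + 1) (j.1 + 1 + N) * sr (i.1 + 1) (j.1 + 1 + N) ^ r) ^ s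

/-- `A₄(s) = ((p_{i⁺,j} s_{i⁺,j}^r)^s)_{i,j=1}^N`. -/
def matA4 (p sr : ℕ → ℕ → ℝ) (N : ℕ) (r s : ℝ) : Matrix (Fin N) (Fin N) ℝ :=
  Matrix.of fun i j => (p (i.1 + 1 + N) (j.1 + 1) * sr (i.1 + 1 + N) (j.1 + 1) ^ r) ^ s

/-- the block matrix `A(s) = [[A₁(s), A₃(s)], [A₄(s), A₂(s)]]`. -/
def matA (p sr : ℕ → ℕ → ℝ) (N : ℕ) (r s : ℝ) :
    Matrix (Fin N ⊕ Fin N) (Fin N ⊕ Fin N) ℝ :=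
  Matrix.fromBlocks (matA1 p sr N r s) (matA3 p sr N r s) (matA4 p sr N r s) (matA2 p sr N r s)

/-- `p̲ = min_{(i,j) ∈ G₂} p_{i,j}`. -/
def pMin (p : ℕ → ℕ → ℝ) (N : ℕ) : ℝ :=
  sInf {x | ∃ i ∈ Finset.Icc 1 (2 * N), ∃ j ∈ Finset.Icc 1 (2 * N), 0 < p i j ∧ x = p i j}

/-- `p̄ = max_{(i,j) ∈ G₂} p_{i,j}`. -/
def pMax (p : ℕ → ℕ → ℝ) (N : ℕ) : ℝ :=
  sSup {x | ∃ i ∈ Finset.Icc 1 (2 * N), ∃ j ∈ Finset.Icc 1 (2 * N), 0 < p i j ∧ x = p i j}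

/-- `s̲ = min_{(i,j) ∈ 𝒮₂} s_{i,j}`. -/
def sMin (p sr : ℕ → ℕ → ℝ) (N : ℕ) : ℝ :=
  sInf {x | ∃ i ∈ Finset.Icc 1 N, ∃ j ∈ Finset.Icc 1 N, isSword p N [i, j] ∧ x = sr i j}

/-- `s̄ = max_{(i,j) ∈ 𝒮₂} s_{i,j}`. -/
def sMax (p sr : ℕ → ℕ → ℝ) (N : ℕ) : ℝ :=
  sSup {x | ∃ i ∈ Finset.Icc 1 N, ∃ j ∈ Finset.Icc 1 N, isSword p N [i, j] ∧ x = sr i j}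

/-- `χ̲ = min_{1 ≤ i ≤ 2N} χ_i`. -/
def chiMin (χ : ℕ → ℝ) (N : ℕ) : ℝ := sInf {x | ∃ i ∈ Finset.Icc 1 (2 * N), x = χ i}

/-- `χ̄ = max_{1 ≤ i ≤ 2N} χ_i`. -/
def chiMax (χ : ℕ → ℝ) (N : ℕ) : ℝ := sSup {x | ∃ i ∈ Finset.Icc 1 (2 * N), x = χ i}

/-- `t` satisfies the defining property of `t_r`:
`(1/n) log Σ_{σ ∈ 𝒮_n} ℰ_r(σ)^{t/(t+r)} → 0`. -/
def trCond (p : ℕ → ℕ → ℝ) (χ : ℕ → ℝ) (sr : ℕ → ℕ → ℝ) (N : ℕ) (r t : ℝ) : Prop :=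
  0 < t ∧
    Tendsto (fun n : ℕ => (n : ℝ)⁻¹ *
      Real.log (∑ σ ∈ Sn p N n, Er p χ sr N r σ ^ (t / (t + r)))) atTop (nhds 0)

/-- the initial word of length `n` of an infinite sequence. -/
def seqTake (x : ℕ → ℕ) (n : ℕ) : List ℕ := (List.range n).map x

/-- `Γ` is a finite maximal antichain among the words satisfying `W`, with respect to the
infinite sequences satisfying `Wseq`. -/
def isMaxAntichain (W : List ℕ → Prop) (Wseq : (ℕ → ℕ) → Prop) (Γ : Finset (List ℕ)) : Prop :=
  (∀ σ ∈ Γ, W σ) ∧ (∀ σ ∈ Γ, ∀ τ ∈ Γ, σ ≠ τ → ¬σ <+: τ) ∧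
    ∀ x : ℕ → ℕ, Wseq x → ∃ n : ℕ, 1 ≤ n ∧ seqTake x n ∈ Γ

/-- infinite admissible sequences with letters in `Ψ`. -/
def isH1seq (p : ℕ → ℕ → ℝ) (N : ℕ) (x : ℕ → ℕ) : Prop :=
  (∀ n, x n ∈ Finset.Icc 1 N) ∧ ∀ n, 0 < p (x n) (x (n + 1))

/-- infinite admissible sequences with letters in `Υ`. -/
def isH2seq (p : ℕ → ℕ → ℝ) (N : ℕ) (x : ℕ → ℕ) : Prop :=
  (∀ n, x n ∈ Finset.Icc (N + 1) (2 * N)) ∧ ∀ n, 0 < p (x n) (x (n + 1))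

/-- minimal length of a word in `Γ`. -/
def minLen (Γ : Finset (List ℕ)) : ℕ := sInf {n | ∃ σ ∈ Γ, σ.length = n}

/-- maximal length of a word in `Γ`. -/
def maxLen (Γ : Finset (List ℕ)) : ℕ := sSup {n | ∃ σ ∈ Γ, σ.length = n}

/-- `Λ_{k,r} = {σ ∈ 𝒮^* : ℰ_r(σ) < c₁^k ≤ ℰ_r(σ^♭)}`. -/
def LamSet (p : ℕ → ℕ → ℝ) (χ : ℕ → ℝ) (sr : ℕ → ℕ → ℝ) (N : ℕ) (r c1 : ℝ) (k : ℕ) :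
    Set (List ℕ) :=
  {σ | isSword p N σ ∧ Er p χ sr N r σ < c1 ^ k ∧ c1 ^ k ≤ Er p χ sr N r σ.dropLast}

/-- `ℒ(σ) = {σ, σ⁺} ∪ {σ|_h ∗ (σ_{h+1}⁺, …, σ_n⁺) : 1 ≤ h ≤ n − 1}`. -/
def Lset (N : ℕ) (σ : List ℕ) : Finset (List ℕ) :=
  (Finset.range (σ.length + 1)).image fun h =>
    σ.take h ++ (σ.drop h).map (fun x => x + N)
end MTM

theorem Finset.exists_pos_forall_le_of_pos {ι : Type*} (s : Finset ι) {f : ι → ℝ}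
    (hf : ∀ i ∈ s, 0 < f i) : ∃ c, 0 < c ∧ ∀ i ∈ s, c ≤ f i := by
  rcases s.eq_empty_or_nonempty with rfl | hs
  · exact ⟨1, one_pos, by simp⟩
  · obtain ⟨i, hi, hmin⟩ := s.exists_min_image f hs
    exact ⟨f i, hf i hi, hmin⟩

theorem Finset.sum_comp_le_mul_sum {ι κ R : Type*} [DecidableEq κ] [Semiring R]
    [PartialOrder R] [IsOrderedRing R] {s : Finset ι} {t : Finset κ} {φ : ι → κ}
    (hφ : ∀ i ∈ s, φ i ∈ t) {K : ℕ} (hK : ∀ y ∈ t, (s.filter (φ · = y)).card ≤ K) {g : κ → R}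
    (hg : ∀ y ∈ t, 0 ≤ g y) : ∑ i ∈ s, g (φ i) ≤ K * ∑ y ∈ t, g y := by
  rw [← Finset.sum_fiberwise_of_maps_to hφ, Finset.mul_sum]
  refine Finset.sum_le_sum fun y hy => ?_
  rw [Finset.sum_congr rfl fun i hi => by rw [(Finset.mem_filter.1 hi).2], Finset.sum_const,
    nsmul_eq_mul]
  exact mul_le_mul_of_nonneg_right (Nat.mono_cast (hK y hy)) (hg y hy)

theorem List.Forall₂.isChain_iff {α β : Type*} {Q : α → β → Prop} {S : α → α → Prop}
    {T : β → β → Prop} (hQ : ∀ ⦃a b a' b'⦄, Q a a' → Q b b' → (S a b ↔ T a' b')) :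
    ∀ {σ : List α} {τ : List β}, List.Forall₂ Q σ τ → (σ.IsChain S ↔ τ.IsChain T)
  | _, _, .nil => by simp
  | _, _, .cons _ .nil => by simp
  | _, _, .cons h₁ (.cons h₂ h) => by
    rw [List.isChain_cons_cons, List.isChain_cons_cons, hQ h₁ h₂,
      List.Forall₂.isChain_iff hQ (.cons h₂ h)]

theorem List.Forall₂.rel_headD {α β : Type*} {Q : α → β → Prop} {σ : List α} {τ : List β}
    (h : List.Forall₂ Q σ τ) {d : α} {d' : β} (hd : Q d d') : Q (σ.headD d) (τ.headD d') := by
  cases h <;> simpa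

theorem List.Forall₂.rel_getLastD {α β : Type*} {Q : α → β → Prop} :
    ∀ {σ : List α} {τ : List β}, List.Forall₂ Q σ τ → ∀ {d : α} {d' : β}, Q d d' →
      Q (σ.getLastD d) (τ.getLastD d')
  | _, _, .nil, _, _, hd => hd
  | _, _, .cons hab h, _, _, _ => by
    simpa only [List.getLastD_cons] using h.rel_getLastD hab

theorem List.headD_mem_of_ne_nil {α : Type*} {l : List α} (h : l ≠ []) (d : α) : l.headD d ∈ l := by
  obtain ⟨a, l, rfl⟩ := List.exists_cons_of_ne_nil h
  simp

theorem List.getLastD_mem_of_ne_nil {α : Type*} {l : List α} (h : l ≠ []) (d : α) :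
    l.getLastD d ∈ l := by
  obtain ⟨l, a, rfl⟩ := (List.eq_nil_or_concat l).resolve_left h
  simp

theorem Real.mul_rpow_le_rpow_of_mul_le {a x y z s : ℝ} (ha : 0 ≤ a) (hx : 0 ≤ x)
    (hy : 0 ≤ y) (hs : 0 ≤ s) (h : a * (x * y) ≤ z) : a ^ s * (x ^ s * y ^ s) ≤ z ^ s := by
  rw [← Real.mul_rpow hx hy, ← Real.mul_rpow ha (mul_nonneg hx hy)]
  exact Real.rpow_le_rpow (by positivity) h hs

theorem List.take_take_append_of_length_eq {ι : Type*} {α w : List ι} {n : ℕ}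
    (hα : α.length = n) (l : ℕ) : ((α ++ w).take (n + l)).take n = α := by
  rw [List.take_take, min_eq_left (Nat.le_add_right n l), List.take_left' hα]

theorem List.drop_take_append_append_drop {ι : Type*} {α c β : List ι} {n l : ℕ}
    (hα : α.length = n) (hβ : β.length = l) :
    ((α ++ (c ++ β)).take (n + l)).drop (n + (β.drop (l - c.length)).length) ++
      β.drop (l - c.length) = β := by
  rw [List.length_drop, hβ, List.take_append, hα, List.take_of_length_le (by omega),
    Nat.add_sub_cancel_left, List.drop_append, hα, List.drop_of_length_le (by omega),
    List.nil_append, Nat.add_sub_cancel_left, List.drop_take, List.drop_append]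
  rcases le_total c.length l with hc | hc
  · rw [Nat.sub_sub_self hc, List.drop_of_length_le le_rfl, Nat.sub_self, List.drop_zero,
      List.nil_append, List.take_append_drop]
  · rw [Nat.sub_eq_zero_of_le hc, Nat.sub_zero, Nat.sub_self, List.take_zero, List.nil_append,
      List.drop_zero]

namespace MTM

theorem sword_eq_pword (w : ℕ → ℕ → ℝ) : ∀ σ : List ℕ, sword w σ = pword w σ
  | [] => rfl
  | [_] => rfl
  | a :: b :: t => by rw [sword, pword, sword_eq_pword w (b :: t)]

theorem pword_append (w : ℕ → ℕ → ℝ) : ∀ {u : List ℕ} (v : List ℕ), u ≠ [] → v ≠ [] →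
    pword w (u ++ v) = pword w u * w (u.getLastD 0) (v.headD 0) * pword w v
  | [a], b :: v, _, _ => by simp [pword]
  | a :: b :: u, v, _, hv => by
    rw [List.cons_append, List.cons_append, pword, ← List.cons_append,
      pword_append w v (List.cons_ne_nil b u) hv, pword, List.getLastD_cons, List.getLastD_cons,
      List.getLastD_cons]
    ring

theorem pword_mem_Icc {w : ℕ → ℕ → ℝ} {m : ℝ} (hm : 0 ≤ m) :
    ∀ {σ : List ℕ}, σ.IsChain (fun a b => w a b ∈ Set.Icc m 1) →
      pword w σ ∈ Set.Icc (m ^ (σ.length - 1)) 1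
  | [], _ => by simp [pword]
  | [_], _ => by simp [pword]
  | a :: b :: t, h => by
    obtain ⟨⟨hab, hab'⟩, ht⟩ := List.isChain_cons_cons.1 h
    obtain ⟨ih, ih'⟩ := pword_mem_Icc hm ht
    refine ⟨?_, ?_⟩
    · simp only [List.length_cons, Nat.add_sub_cancel] at ih ⊢
      rw [pword, pow_succ']
      exact mul_le_mul hab ih (pow_nonneg hm _) (hm.trans hab)
    · exact mul_le_one₀ hab' ((pow_nonneg hm _).trans ih) ih'

theorem mem_lifts {N : ℕ} : ∀ {σ τ : List ℕ},
    τ ∈ lifts N σ ↔ List.Forall₂ (fun i x => x = i ∨ x = i + N) σ τ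
  | [], τ => by simp [lifts, List.forall₂_nil_left_iff, eq_comm]
  | i :: t, τ => by
    simp only [lifts, Finset.mem_biUnion, Finset.mem_insert, Finset.mem_singleton,
      List.forall₂_cons_left_iff, mem_lifts]
    constructor
    · rintro ⟨l, hl, rfl | rfl⟩
      exacts [⟨i, l, Or.inl rfl, hl, rfl⟩, ⟨i + N, l, Or.inr rfl, hl, rfl⟩]
    · rintro ⟨x, l, hx, hl, rfl⟩
      exact ⟨l, hl, by rcases hx with rfl | rfl <;> simp⟩

theorem self_mem_lifts {N : ℕ} (σ : List ℕ) : σ ∈ lifts N σ :=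
  mem_lifts.2 (List.forall₂_same.2 fun _ _ => Or.inl rfl)

theorem length_eq_of_mem_lifts {N : ℕ} {σ τ : List ℕ} (h : τ ∈ lifts N σ) :
    τ.length = σ.length :=
  (mem_lifts.1 h).length_eq.symm

theorem card_lifts_le {N : ℕ} : ∀ σ : List ℕ, (lifts N σ).card ≤ 2 ^ σ.length
  | [] => by simp [lifts]
  | a :: t => by
    refine Finset.card_biUnion_le.trans ?_
    calc ∑ l ∈ lifts N t, ({a :: l, (a + N) :: l} : Finset (List ℕ)).card
        ≤ ∑ _l ∈ lifts N t, 2 := Finset.sum_le_sum fun l _ => Finset.card_le_two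
      _ ≤ 2 ^ (a :: t).length := by
        rw [Finset.sum_const, smul_eq_mul, List.length_cons, pow_succ]
        exact Nat.mul_le_mul_right 2 (card_lifts_le t)

theorem sum_lifts_append {N : ℕ} (hN : 0 < N) (f : List ℕ → ℝ) : ∀ u v : List ℕ,
    ∑ τ ∈ lifts N (u ++ v), f τ = ∑ τ' ∈ lifts N u, ∑ τ'' ∈ lifts N v, f (τ' ++ τ'')
  | [], v => by simp [lifts]
  | a :: u, v => by
    have hdisj : ∀ w : List ℕ, (↑(lifts N w) : Set (List ℕ)).PairwiseDisjoint
        (fun l => ({a :: l, (a + N) :: l} : Finset (List ℕ))) := by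
      intro w x _ y _ hxy
      simp only [Function.onFun, Finset.disjoint_left, Finset.mem_insert, Finset.mem_singleton]
      rintro z (rfl | rfl) (h | h) <;> simp_all
    have hpair : ∀ l : List ℕ, a :: l ≠ (a + N) :: l := fun l h => by
      have := (List.cons.inj h).1
      omega
    simp only [List.cons_append, lifts, Finset.sum_biUnion (hdisj _), Finset.sum_pair (hpair _),
      sum_lifts_append hN _ u v, Finset.sum_add_distrib]

theorem mem_wordsOfLen {S : Finset ℕ} : ∀ {n : ℕ} {σ : List ℕ},
    σ ∈ wordsOfLen S n ↔ σ.length = n ∧ ∀ x ∈ σ, x ∈ S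
  | 0, σ => by
    simp only [wordsOfLen, Finset.mem_singleton, List.length_eq_zero_iff]
    exact ⟨fun h => ⟨h, by simp [h]⟩, And.left⟩
  | n + 1, [] => by simp [wordsOfLen]
  | n + 1, a :: σ => by
    simp only [wordsOfLen, Finset.mem_biUnion, Finset.mem_image, List.cons.injEq,
      mem_wordsOfLen, List.length_cons, List.mem_cons, forall_eq_or_imp]
    constructor
    · rintro ⟨t, ⟨ht, hS⟩, b, hb, rfl, rfl⟩
      exact ⟨by rw [ht], hb, hS⟩
    · rintro ⟨ht, ha, hS⟩
      exact ⟨σ, ⟨by omega, hS⟩, a, ha, rfl, rfl⟩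

section Er

variable {p : ℕ → ℕ → ℝ} {χ : ℕ → ℝ} {sr : ℕ → ℕ → ℝ} {N : ℕ} {r : ℝ}

theorem Er_nil : Er p χ sr N r [] = 1 := if_pos rfl

theorem Er_of_ne_nil {σ : List ℕ} (hσ : σ ≠ []) :
    Er p χ sr N r σ = muJ p χ N σ * sword sr σ ^ r := if_neg hσ

end Er

def IsPsiChain (p : ℕ → ℕ → ℝ) (N : ℕ) (σ : List ℕ) : Prop :=
  (∀ x ∈ σ, x ∈ Finset.Icc 1 N) ∧ σ.IsChain (edge p)

section PsiChain

variable {p : ℕ → ℕ → ℝ} {N : ℕ}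

theorem IsPsiChain.of_append {u v : List ℕ} (h : IsPsiChain p N (u ++ v)) :
    IsPsiChain p N u ∧ IsPsiChain p N v :=
  have hch := List.isChain_append.1 h.2
  ⟨⟨fun x hx => h.1 x (List.mem_append_left v hx), hch.1⟩,
    ⟨fun x hx => h.1 x (List.mem_append_right u hx), hch.2.1⟩⟩

theorem IsPsiChain.edge_getLastD_headD {u v : List ℕ} (h : IsPsiChain p N (u ++ v))
    (hu : u ≠ []) (hv : v ≠ []) : edge p (u.getLastD 0) (v.headD 0) := by
  obtain ⟨u, a, rfl⟩ := (List.eq_nil_or_concat u).resolve_left hu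
  obtain ⟨b, v, rfl⟩ := List.exists_cons_of_ne_nil hv
  have hch := h.2
  rw [List.concat_eq_append, List.append_assoc, List.singleton_append,
    List.isChain_append_cons_cons] at hch
  simpa using hch.2.1

theorem IsPsiChain.take {σ : List ℕ} (h : IsPsiChain p N σ) (k : ℕ) :
    IsPsiChain p N (σ.take k) :=
  ⟨fun x hx => h.1 x (List.mem_of_mem_take hx), h.2.take k⟩

theorem IsPsiChain.drop {σ : List ℕ} (h : IsPsiChain p N σ) (k : ℕ) :
    IsPsiChain p N (σ.drop k) :=
  ⟨fun x hx => h.1 x (List.mem_of_mem_drop hx), h.2.drop k⟩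

theorem IsPsiChain.append_bridge {α c β : List ℕ} (hα : IsPsiChain p N α)
    (hβ : IsPsiChain p N β) (hαne : α ≠ []) (hβne : β ≠ []) (hc : ∀ x ∈ c, x ∈ Finset.Icc 1 N)
    (hlink : (α.getLastD 0 :: (c ++ [β.headD 0])).IsChain (edge p)) :
    IsPsiChain p N (α ++ (c ++ β)) := by
  refine ⟨fun x hx => ?_, ?_⟩
  · simp only [List.mem_append] at hx
    rcases hx with hx | hx | hx
    exacts [hα.1 x hx, hc x hx, hβ.1 x hx]
  obtain ⟨α, a, rfl⟩ := (List.eq_nil_or_concat α).resolve_left hαne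
  obtain ⟨b, β, rfl⟩ := List.exists_cons_of_ne_nil hβne
  rw [List.concat_eq_append] at hα hlink ⊢
  rw [List.getLastD_concat, List.headD_cons] at hlink
  rw [List.append_assoc, List.singleton_append, List.isChain_split, ← List.cons_append,
    List.isChain_split (l₁ := a :: c)]
  exact ⟨hα.2, hlink, hβ.2⟩

theorem edge_iff_of_A4 (hA4 : A4 p N) {a b x y : ℕ} (ha : a ∈ Finset.Icc 1 N)
    (hb : b ∈ Finset.Icc 1 N) (hx : x = a ∨ x = a + N) (hy : y = b ∨ y = b + N) :
    edge p x y ↔ edge p a b := by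
  unfold edge
  rcases hA4 a ha b hb with h | h <;> rcases hx with rfl | rfl <;> rcases hy with rfl | rfl <;>
    simp [h]

theorem isChain_iff_of_mem_lifts (hA4 : A4 p N) {σ τ : List ℕ}
    (hσ : ∀ x ∈ σ, x ∈ Finset.Icc 1 N) (hτ : τ ∈ lifts N σ) :
    τ.IsChain (edge p) ↔ σ.IsChain (edge p) :=
  (((List.forall₂_and_left σ τ).2 ⟨hσ, mem_lifts.1 hτ⟩).isChain_iff
    fun _ _ _ _ ha hb => (edge_iff_of_A4 hA4 ha.1 hb.1 ha.2 hb.2).symm).symm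

theorem Gam_eq_lifts (hA4 : A4 p N) {σ : List ℕ} (hσ : IsPsiChain p N σ) :
    Gam p N σ = lifts N σ :=
  Finset.filter_true_of_mem fun _ hτ => (isChain_iff_of_mem_lifts hA4 hσ.1 hτ).2 hσ.2

theorem isSword_iff (hA4 : A4 p N) {σ : List ℕ} :
    isSword p N σ ↔ σ ≠ [] ∧ IsPsiChain p N σ := by
  constructor
  · rintro ⟨⟨hne, hΨ⟩, τ, hτ⟩
    rw [Gam, Finset.mem_filter] at hτ
    exact ⟨hne, hΨ, (isChain_iff_of_mem_lifts hA4 hΨ hτ.1).1 hτ.2⟩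
  · rintro ⟨hne, hσ⟩
    exact ⟨⟨hne, hσ.1⟩, σ, by rw [Gam_eq_lifts hA4 hσ]; exact self_mem_lifts σ⟩

theorem mem_Sn_iff (hA4 : A4 p N) {n : ℕ} (hn : n ≠ 0) {σ : List ℕ} :
    σ ∈ Sn p N n ↔ σ.length = n ∧ IsPsiChain p N σ := by
  rw [Sn, Finset.mem_filter, mem_wordsOfLen, isSword_iff hA4]
  constructor
  · rintro ⟨⟨hlen, -⟩, -, hσ⟩
    exact ⟨hlen, hσ⟩
  · rintro ⟨hlen, hσ⟩
    exact ⟨⟨hlen, hσ.1⟩, by rintro rfl; exact hn hlen.symm, hσ⟩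

end PsiChain

def IsBridge (p : ℕ → ℕ → ℝ) (N M : ℕ) (bridge : ℕ → ℕ → List ℕ) : Prop :=
  ∀ a ∈ Finset.Icc 1 N, ∀ b ∈ Finset.Icc 1 N, (bridge a b).length ≤ M ∧
    (∀ x ∈ bridge a b, x ∈ Finset.Icc 1 N) ∧ (a :: (bridge a b ++ [b])).IsChain (edge p)

theorem exists_isBridge {p : ℕ → ℕ → ℝ} {N : ℕ} (hA5 : A5 p N) :
    ∃ M bridge, IsBridge p N M bridge := by
  have hpath : ∀ a b, ∃ w : List ℕ, a ∈ Finset.Icc 1 N → b ∈ Finset.Icc 1 N →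
      (∀ x ∈ w, x ∈ Finset.Icc 1 N) ∧ (a :: (w ++ [b])).IsChain (edge p) := by
    intro a b
    by_cases hab : a ∈ Finset.Icc 1 N ∧ b ∈ Finset.Icc 1 N
    · obtain ⟨w, hw⟩ := hA5 a hab.1 b hab.2
      exact ⟨w, fun _ _ => hw⟩
    · exact ⟨[], fun ha hb => absurd ⟨ha, hb⟩ hab⟩
  choose bridge hbridge using hpath
  obtain ⟨M, hM⟩ := Finset.exists_le
    ((Finset.Icc 1 N ×ˢ Finset.Icc 1 N).image fun q => (bridge q.1 q.2).length)
  exact ⟨M, bridge, fun a ha b hb =>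
    ⟨hM _ (Finset.mem_image_of_mem (fun q : ℕ × ℕ => (bridge q.1 q.2).length)
      (Finset.mem_product.2 ⟨ha, hb⟩ : (a, b) ∈ _)), hbridge a b ha hb⟩⟩

def joinWith (bridge : ℕ → ℕ → List ℕ) (α β : List ℕ) : List ℕ :=
  α ++ (bridge (α.getLastD 0) (β.headD 0) ++ β)

def shortWords (N M : ℕ) : Finset (List ℕ) :=
  (Finset.range (M + 1)).biUnion (wordsOfLen (Finset.Icc 1 N))

theorem shortWords_card_pos (N M : ℕ) : 0 < (shortWords N M).card :=
  Finset.card_pos.2 ⟨[], Finset.mem_biUnion.2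
    ⟨0, Finset.mem_range.2 M.succ_pos, mem_wordsOfLen.2 ⟨rfl, by simp⟩⟩⟩

section Bridge

variable {p : ℕ → ℕ → ℝ} {N M : ℕ} {bridge : ℕ → ℕ → List ℕ} {α β : List ℕ}

theorem IsBridge.length_le (hb : IsBridge p N M bridge) (hα : IsPsiChain p N α)
    (hβ : IsPsiChain p N β) (hαne : α ≠ []) (hβne : β ≠ []) :
    (bridge (α.getLastD 0) (β.headD 0)).length ≤ M :=
  (hb _ (hα.1 _ (List.getLastD_mem_of_ne_nil hαne 0)) _
    (hβ.1 _ (List.headD_mem_of_ne_nil hβne 0))).1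

theorem IsBridge.isPsiChain_joinWith (hb : IsBridge p N M bridge) (hα : IsPsiChain p N α)
    (hβ : IsPsiChain p N β) (hαne : α ≠ []) (hβne : β ≠ []) :
    IsPsiChain p N (joinWith bridge α β) :=
  have hab := hb _ (hα.1 _ (List.getLastD_mem_of_ne_nil hαne 0)) _
    (hβ.1 _ (List.headD_mem_of_ne_nil hβne 0))
  hα.append_bridge hβ hαne hβne hab.2.1 hab.2.2

theorem IsBridge.take_joinWith_mem_Sn (hb : IsBridge p N M bridge) (hA4 : A4 p N) {n l : ℕ}
    (hn : n ≠ 0) (hl : l ≠ 0) (hα : α ∈ Sn p N n) (hβ : β ∈ Sn p N l) :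
    (joinWith bridge α β).take (n + l) ∈ Sn p N (n + l) := by
  rw [mem_Sn_iff hA4 hn] at hα
  rw [mem_Sn_iff hA4 hl] at hβ
  rw [mem_Sn_iff hA4 (by omega)]
  have hjoin := hb.isPsiChain_joinWith hα.2 hβ.2 (List.ne_nil_of_length_pos (by omega))
    (List.ne_nil_of_length_pos (by omega))
  refine ⟨?_, hjoin.take _⟩
  simp only [joinWith, List.length_take, List.length_append, hα.1, hβ.1]
  omega

theorem IsBridge.card_filter_take_joinWith_le (hb : IsBridge p N M bridge) (hA4 : A4 p N)
    {n l : ℕ} (hn : n ≠ 0) (hl : l ≠ 0) (y : List ℕ) :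
    (((Sn p N n) ×ˢ (Sn p N l)).filter
      fun q => (joinWith bridge q.1 q.2).take (n + l) = y).card ≤ (shortWords N M).card := by
  -- a pair in the fibre is recovered from `y` and the last `min l |bridge|` letters of `β`
  refine Finset.card_le_card_of_injOn
    (fun q => q.2.drop (l - (bridge (q.1.getLastD 0) (q.2.headD 0)).length)) ?_ ?_
  · intro q hq
    obtain ⟨hq, -⟩ := Finset.mem_filter.1 hq
    obtain ⟨hα, hβ⟩ := Finset.mem_product.1 hq
    rw [mem_Sn_iff hA4 hn] at hα
    rw [mem_Sn_iff hA4 hl] at hβ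
    have hlen := hb.length_le hα.2 hβ.2 (List.ne_nil_of_length_pos (by omega))
      (List.ne_nil_of_length_pos (by omega))
    refine Finset.mem_biUnion.2 ⟨_, Finset.mem_range.2 ?_, mem_wordsOfLen.2
      ⟨rfl, fun x hx => hβ.2.1 x (List.mem_of_mem_drop hx)⟩⟩
    simp only [List.length_drop, hβ.1]
    omega
  · intro q₁ hq₁ q₂ hq₂ hd
    obtain ⟨hq₁, hy₁⟩ := Finset.mem_filter.1 hq₁
    obtain ⟨hq₂, hy₂⟩ := Finset.mem_filter.1 hq₂
    obtain ⟨hα₁, hβ₁⟩ := Finset.mem_product.1 hq₁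
    obtain ⟨hα₂, hβ₂⟩ := Finset.mem_product.1 hq₂
    rw [mem_Sn_iff hA4 hn] at hα₁ hα₂
    rw [mem_Sn_iff hA4 hl] at hβ₁ hβ₂
    have hα : q₁.1 = q₂.1 := by
      simpa only [joinWith, List.take_take_append_of_length_eq hα₁.1,
        List.take_take_append_of_length_eq hα₂.1] using congrArg (List.take n) (hy₁.trans hy₂.symm)
    have hβ : q₁.2 = q₂.2 := by
      rw [← List.drop_take_append_append_drop hα₁.1 hβ₁.1,
        ← List.drop_take_append_append_drop hα₂.1 hβ₂.1]
      simp only at hd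
      rw [← joinWith, ← joinWith, hy₁, hy₂, hd]
    exact Prod.ext hα hβ

end Bridge

structure WeightBounds (p : ℕ → ℕ → ℝ) (χ : ℕ → ℝ) (sr : ℕ → ℕ → ℝ) (N : ℕ) (c : ℝ) :
    Prop where
  N_pos : 0 < N
  a4 : A4 p N
  c_pos : 0 < c
  chi_mem : ∀ a ∈ Finset.Icc 1 (2 * N), χ a ∈ Set.Icc c 1
  p_mem : ∀ a b, edge p a b → p a b ∈ Set.Icc c 1
  sr_mem : ∀ a ∈ Finset.Icc 1 N, ∀ b ∈ Finset.Icc 1 N, edge p a b → sr a b ∈ Set.Icc c 1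

theorem exists_weightBounds {p : ℕ → ℕ → ℝ} {χ : ℕ → ℝ} {sr : ℕ → ℕ → ℝ} {N : ℕ} (hN : 0 < N)
    (hp0 : ∀ i j, 0 ≤ p i j)
    (hpsupp : ∀ i j, 0 < p i j → i ∈ Finset.Icc 1 (2 * N) ∧ j ∈ Finset.Icc 1 (2 * N))
    (hpsum : ∀ i ∈ Finset.Icc 1 (2 * N), ∑ j ∈ Finset.Icc 1 (2 * N), p i j = 1)
    (hχpos : ∀ i ∈ Finset.Icc 1 (2 * N), 0 < χ i) (hχsum : ∑ i ∈ Finset.Icc 1 (2 * N), χ i = 1)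
    (hsr : ∀ i ∈ Finset.Icc 1 N, ∀ j ∈ Finset.Icc 1 N, isSword p N [i, j] →
      sr i j ∈ Set.Ioc 0 1)
    (hA4 : A4 p N) : ∃ c, WeightBounds p χ sr N c := by
  set Ω := Finset.Icc 1 (2 * N)
  set Ψ := Finset.Icc 1 N
  have hpair : ∀ i ∈ Ψ, ∀ j ∈ Ψ, edge p i j → isSword p N [i, j] := fun i hi j hj hij =>
    (isSword_iff hA4).2 ⟨List.cons_ne_nil _ _, fun x hx => by
      rcases List.mem_pair.1 hx with rfl | rfl
      exacts [hi, hj], List.isChain_pair.2 hij⟩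
  obtain ⟨c₁, hc₁, h₁⟩ := Ω.exists_pos_forall_le_of_pos hχpos
  obtain ⟨c₂, hc₂, h₂⟩ := ((Ω ×ˢ Ω).filter fun q => edge p q.1 q.2).exists_pos_forall_le_of_pos
    (f := fun q => p q.1 q.2) fun q hq => by exact (Finset.mem_filter.1 hq).2
  obtain ⟨c₃, hc₃, h₃⟩ := ((Ψ ×ˢ Ψ).filter fun q => edge p q.1 q.2).exists_pos_forall_le_of_pos
    (f := fun q => sr q.1 q.2) fun q hq => by
      obtain ⟨hq, hpq⟩ := Finset.mem_filter.1 hq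
      obtain ⟨hq₁, hq₂⟩ := Finset.mem_product.1 hq
      exact (hsr _ hq₁ _ hq₂ (hpair _ hq₁ _ hq₂ hpq)).1
  refine ⟨min c₁ (min c₂ c₃), hN, hA4, by positivity, fun a ha => ⟨?_, ?_⟩,
    fun a b hab => ⟨?_, ?_⟩, fun a ha b hb hab => ⟨?_, (hsr a ha b hb (hpair a ha b hb hab)).2⟩⟩
  · exact (min_le_left _ _).trans (h₁ a ha)
  · exact hχsum ▸ Finset.single_le_sum (fun i hi => (hχpos i hi).le) ha
  · obtain ⟨ha, hb⟩ := hpsupp a b hab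
    exact (min_le_right _ _).trans <| (min_le_left _ _).trans <|
      h₂ (a, b) (Finset.mem_filter.2 ⟨Finset.mem_product.2 ⟨ha, hb⟩, hab⟩)
  · obtain ⟨ha, hb⟩ := hpsupp a b hab
    exact hpsum a ha ▸ Finset.single_le_sum (fun j _ => hp0 a j) hb
  · exact (min_le_right _ _).trans <| (min_le_right _ _).trans <|
      h₃ (a, b) (Finset.mem_filter.2 ⟨Finset.mem_product.2 ⟨ha, hb⟩, hab⟩)

namespace WeightBounds

variable {p : ℕ → ℕ → ℝ} {χ : ℕ → ℝ} {sr : ℕ → ℕ → ℝ} {N M : ℕ} {c r s : ℝ}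
  {σ τ u v α β : List ℕ} {bridge : ℕ → ℕ → List ℕ}

theorem c_le_one (h : WeightBounds p χ sr N c) : c ≤ 1 :=
  have h1 := h.chi_mem 1 (Finset.mem_Icc.2 ⟨le_rfl, by have := h.N_pos; omega⟩)
  h1.1.trans h1.2

theorem chi_headD_mem_Icc (h : WeightBounds p χ sr N c) (hσ : ∀ x ∈ σ, x ∈ Finset.Icc 1 N)
    (hne : σ ≠ []) (hτ : τ ∈ lifts N σ) : χ (τ.headD 0) ∈ Set.Icc c 1 := by
  obtain ⟨a, σ, rfl⟩ := List.exists_cons_of_ne_nil hne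
  have ha := Finset.mem_Icc.1 (hσ a List.mem_cons_self)
  apply h.chi_mem
  rcases (mem_lifts.1 hτ).rel_headD (d := 0) (d' := 0) (Or.inl rfl) with e | e <;>
    simp only [e, List.headD_cons, Finset.mem_Icc] <;> omega

theorem pword_mem_Icc_of_mem_lifts (h : WeightBounds p χ sr N c) (hσ : IsPsiChain p N σ)
    (hτ : τ ∈ lifts N σ) : pword p τ ∈ Set.Icc (c ^ (σ.length - 1)) 1 := by
  rw [← length_eq_of_mem_lifts hτ]
  exact pword_mem_Icc h.c_pos.le
    (((isChain_iff_of_mem_lifts h.a4 hσ.1 hτ).2 hσ.2).imp fun a b => h.p_mem a b)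

theorem chi_headD_mul_pword_mem_Icc (h : WeightBounds p χ sr N c) (hσ : IsPsiChain p N σ)
    (hne : σ ≠ []) (hτ : τ ∈ lifts N σ) :
    χ (τ.headD 0) * pword p τ ∈ Set.Icc (c ^ σ.length) 1 := by
  obtain ⟨hχ, hχ'⟩ := h.chi_headD_mem_Icc hσ.1 hne hτ
  obtain ⟨hp, hp'⟩ := h.pword_mem_Icc_of_mem_lifts hσ hτ
  have hlen : c ^ σ.length = c * c ^ (σ.length - 1) := by
    rw [← pow_succ', Nat.sub_add_cancel (List.length_pos_of_ne_nil hne)]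
  have hp0 : 0 ≤ pword p τ := (pow_nonneg h.c_pos.le _).trans hp
  exact ⟨hlen ▸ mul_le_mul hχ hp (pow_nonneg h.c_pos.le _) (h.c_pos.le.trans hχ),
    mul_le_one₀ hχ' hp0 hp'⟩

theorem muJ_mem_Icc (h : WeightBounds p χ sr N c) (hσ : IsPsiChain p N σ) (hne : σ ≠ []) :
    muJ p χ N σ ∈ Set.Icc (c ^ σ.length) (2 ^ σ.length) := by
  have hw := fun τ (hτ : τ ∈ lifts N σ) => h.chi_headD_mul_pword_mem_Icc hσ hne hτ
  rw [muJ, Gam_eq_lifts h.a4 hσ]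
  constructor
  · exact (hw σ (self_mem_lifts σ)).1.trans (Finset.single_le_sum
      (fun τ hτ => (pow_nonneg h.c_pos.le _).trans (hw τ hτ).1) (self_mem_lifts σ))
  · calc ∑ τ ∈ lifts N σ, χ (τ.headD 0) * pword p τ ≤ ∑ _τ ∈ lifts N σ, 1 :=
          Finset.sum_le_sum fun τ hτ => (hw τ hτ).2
      _ ≤ 2 ^ σ.length := by
        rw [Finset.sum_const, nsmul_one]
        exact_mod_cast card_lifts_le σ

theorem sword_mem_Icc (h : WeightBounds p χ sr N c) (hσ : IsPsiChain p N σ) :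
    sword sr σ ∈ Set.Icc (c ^ (σ.length - 1)) 1 := by
  rw [sword_eq_pword]
  exact pword_mem_Icc h.c_pos.le ((List.IsChain.iff_mem.1 hσ.2).imp
    fun a b ⟨ha, hb, hab⟩ => h.sr_mem a (hσ.1 a ha) b (hσ.1 b hb) hab)

theorem pow_le_Er (h : WeightBounds p χ sr N c) (hr : 0 ≤ r) (hσ : IsPsiChain p N σ) :
    (c * c ^ r) ^ σ.length ≤ Er p χ sr N r σ := by
  rcases eq_or_ne σ [] with rfl | hne
  · simp [Er_nil]
  have hc := h.c_pos
  have hμ := (h.muJ_mem_Icc hσ hne).1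
  have hs := (pow_le_pow_of_le_one hc.le h.c_le_one (Nat.sub_le _ 1)).trans (h.sword_mem_Icc hσ).1
  rw [Er_of_ne_nil hne, mul_pow, Real.rpow_pow_comm hc.le]
  exact mul_le_mul hμ (Real.rpow_le_rpow (by positivity) hs hr) (by positivity)
    ((pow_pos hc _).le.trans hμ)

theorem Er_pos (h : WeightBounds p χ sr N c) (hr : 0 ≤ r) (hσ : IsPsiChain p N σ) :
    0 < Er p χ sr N r σ :=
  have := h.c_pos
  (by positivity : (0 : ℝ) < (c * c ^ r) ^ σ.length).trans_le (h.pow_le_Er hr hσ)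

theorem Er_nonneg_of_mem_Sn (h : WeightBounds p χ sr N c) (hr : 0 ≤ r) {k : ℕ} (hk : k ≠ 0)
    (hσ : σ ∈ Sn p N k) : 0 ≤ Er p χ sr N r σ :=
  (h.Er_pos hr ((mem_Sn_iff h.a4 hk).1 hσ).2).le

theorem Er_le_two_pow (h : WeightBounds p χ sr N c) (hr : 0 ≤ r) (hσ : IsPsiChain p N σ) :
    Er p χ sr N r σ ≤ 2 ^ σ.length := by
  rcases eq_or_ne σ [] with rfl | hne
  · simp [Er_nil]
  obtain ⟨hs, hs'⟩ := h.sword_mem_Icc hσ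
  have hs0 : 0 ≤ sword sr σ := (pow_nonneg h.c_pos.le _).trans hs
  rw [Er_of_ne_nil hne, ← mul_one ((2 : ℝ) ^ σ.length)]
  exact mul_le_mul (h.muJ_mem_Icc hσ hne).2 (Real.rpow_le_one hs0 hs' hr)
    (Real.rpow_nonneg hs0 r) (by positivity)

theorem p_getLastD_headD_mem_Icc (h : WeightBounds p χ sr N c) (huv : IsPsiChain p N (u ++ v))
    (hu : u ≠ []) (hv : v ≠ []) {τ' τ'' : List ℕ} (hτ' : τ' ∈ lifts N u) (hτ'' : τ'' ∈ lifts N v) :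
    p (τ'.getLastD 0) (τ''.headD 0) ∈ Set.Icc c 1 :=
  h.p_mem _ _ <| (edge_iff_of_A4 h.a4 (huv.1 _ (List.mem_append_left v
      (List.getLastD_mem_of_ne_nil hu 0))) (huv.1 _ (List.mem_append_right u
      (List.headD_mem_of_ne_nil hv 0))) ((mem_lifts.1 hτ').rel_getLastD (Or.inl rfl))
      ((mem_lifts.1 hτ'').rel_headD (Or.inl rfl))).2 (huv.edge_getLastD_headD hu hv)

theorem muJ_append_eq (h : WeightBounds p χ sr N c) (huv : IsPsiChain p N (u ++ v))
    (hu : u ≠ []) (hv : v ≠ []) :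
    muJ p χ N (u ++ v) = ∑ τ' ∈ lifts N u, ∑ τ'' ∈ lifts N v,
      χ (τ'.headD 0) * pword p τ' * (p (τ'.getLastD 0) (τ''.headD 0) * pword p τ'') := by
  rw [muJ, Gam_eq_lifts h.a4 huv, sum_lifts_append h.N_pos]
  refine Finset.sum_congr rfl fun τ' hτ' => Finset.sum_congr rfl fun τ'' hτ'' => ?_
  have hτ'ne : τ' ≠ [] := List.ne_nil_of_length_pos
    ((length_eq_of_mem_lifts hτ').symm ▸ List.length_pos_of_ne_nil hu)
  have hτ''ne : τ'' ≠ [] := List.ne_nil_of_length_pos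
    ((length_eq_of_mem_lifts hτ'').symm ▸ List.length_pos_of_ne_nil hv)
  obtain ⟨a, τ₀, rfl⟩ := List.exists_cons_of_ne_nil hτ'ne
  rw [pword_append p τ'' hτ'ne hτ''ne, List.cons_append, List.headD_cons, List.headD_cons]
  ring

theorem muJ_append_le (h : WeightBounds p χ sr N c) (huv : IsPsiChain p N (u ++ v))
    (hu : u ≠ []) (hv : v ≠ []) : muJ p χ N (u ++ v) ≤ c⁻¹ * (muJ p χ N u * muJ p χ N v) := by
  obtain ⟨hu', hv'⟩ := huv.of_append
  rw [h.muJ_append_eq huv hu hv, muJ, muJ, Gam_eq_lifts h.a4 hu', Gam_eq_lifts h.a4 hv',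
    Finset.sum_mul_sum, Finset.mul_sum]
  refine Finset.sum_le_sum fun τ' hτ' => ?_
  rw [Finset.mul_sum]
  refine Finset.sum_le_sum fun τ'' hτ'' => ?_
  have hw' := (h.chi_headD_mul_pword_mem_Icc hu' hu hτ').1
  have hχ := (h.chi_headD_mem_Icc hv'.1 hv hτ'').1
  have hp := (h.pword_mem_Icc_of_mem_lifts hv' hτ'').1
  have hl := (h.p_getLastD_headD_mem_Icc huv hu hv hτ' hτ'').2
  have hc := h.c_pos
  have hlink :
      p (τ'.getLastD 0) (τ''.headD 0) * pword p τ'' ≤ c⁻¹ * (χ (τ''.headD 0) * pword p τ'') := by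
    rw [← mul_assoc]
    refine mul_le_mul_of_nonneg_right ?_ ((pow_nonneg hc.le _).trans hp)
    exact hl.trans ((le_inv_mul_iff₀ hc).2 (by simpa using hχ))
  calc χ (τ'.headD 0) * pword p τ' * (p (τ'.getLastD 0) (τ''.headD 0) * pword p τ'')
      ≤ χ (τ'.headD 0) * pword p τ' * (c⁻¹ * (χ (τ''.headD 0) * pword p τ'')) :=
        mul_le_mul_of_nonneg_left hlink ((pow_nonneg hc.le _).trans hw')
    _ = _ := by ring

theorem muJ_append_ge (h : WeightBounds p χ sr N c) (huv : IsPsiChain p N (u ++ v))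
    (hu : u ≠ []) (hv : v ≠ []) : c * (muJ p χ N u * muJ p χ N v) ≤ muJ p χ N (u ++ v) := by
  obtain ⟨hu', hv'⟩ := huv.of_append
  rw [h.muJ_append_eq huv hu hv, muJ, muJ, Gam_eq_lifts h.a4 hu', Gam_eq_lifts h.a4 hv',
    Finset.sum_mul_sum, Finset.mul_sum]
  refine Finset.sum_le_sum fun τ' hτ' => ?_
  rw [Finset.mul_sum]
  refine Finset.sum_le_sum fun τ'' hτ'' => ?_
  have hw' := (h.chi_headD_mul_pword_mem_Icc hu' hu hτ').1
  have hχ := (h.chi_headD_mem_Icc hv'.1 hv hτ'').2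
  have hp := (h.pword_mem_Icc_of_mem_lifts hv' hτ'').1
  have hl := (h.p_getLastD_headD_mem_Icc huv hu hv hτ' hτ'').1
  have hc := h.c_pos
  have hlink :
      c * (χ (τ''.headD 0) * pword p τ'') ≤ p (τ'.getLastD 0) (τ''.headD 0) * pword p τ'' := by
    rw [← mul_assoc]
    refine mul_le_mul_of_nonneg_right ?_ ((pow_nonneg hc.le _).trans hp)
    exact (mul_le_of_le_one_right hc.le hχ).trans hl
  calc c * (χ (τ'.headD 0) * pword p τ' * (χ (τ''.headD 0) * pword p τ''))
      = χ (τ'.headD 0) * pword p τ' * (c * (χ (τ''.headD 0) * pword p τ'')) := by ring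
    _ ≤ _ := mul_le_mul_of_nonneg_left hlink ((pow_nonneg hc.le _).trans hw')

theorem sword_append_mem_Icc (h : WeightBounds p χ sr N c) (huv : IsPsiChain p N (u ++ v))
    (hu : u ≠ []) (hv : v ≠ []) :
    sword sr (u ++ v) ∈ Set.Icc (c * (sword sr u * sword sr v)) (sword sr u * sword sr v) := by
  obtain ⟨hu', hv'⟩ := huv.of_append
  have hsu := (pow_nonneg h.c_pos.le _).trans (h.sword_mem_Icc hu').1
  have hsv := (pow_nonneg h.c_pos.le _).trans (h.sword_mem_Icc hv').1
  obtain ⟨hl, hl'⟩ := h.sr_mem _ (hu'.1 _ (List.getLastD_mem_of_ne_nil hu 0)) _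
    (hv'.1 _ (List.headD_mem_of_ne_nil hv 0)) (huv.edge_getLastD_headD hu hv)
  have e : sword sr (u ++ v) = sword sr u * sr (u.getLastD 0) (v.headD 0) * sword sr v := by
    simp only [sword_eq_pword]
    exact pword_append sr v hu hv
  rw [e]
  constructor
  · calc c * (sword sr u * sword sr v) = sword sr u * c * sword sr v := by ring
      _ ≤ _ := by gcongr
  · calc _ ≤ sword sr u * 1 * sword sr v := by gcongr
      _ = _ := by ring

theorem Er_append_le (h : WeightBounds p χ sr N c) (hr : 0 ≤ r) (huv : IsPsiChain p N (u ++ v)) :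
    Er p χ sr N r (u ++ v) ≤ c⁻¹ * (Er p χ sr N r u * Er p χ sr N r v) := by
  obtain ⟨hu', hv'⟩ := huv.of_append
  have hc1 : 1 ≤ c⁻¹ := (one_le_inv₀ h.c_pos).2 h.c_le_one
  rcases eq_or_ne u [] with rfl | hu
  · simpa [Er_nil] using le_mul_of_one_le_left (h.Er_pos hr hv').le hc1
  rcases eq_or_ne v [] with rfl | hv
  · simpa [Er_nil] using le_mul_of_one_le_left (h.Er_pos hr hu').le hc1
  have hs := h.sword_append_mem_Icc huv hu hv
  have hsu := (pow_nonneg h.c_pos.le _).trans (h.sword_mem_Icc hu').1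
  have hsv := (pow_nonneg h.c_pos.le _).trans (h.sword_mem_Icc hv').1
  have hμu := (pow_nonneg h.c_pos.le _).trans (h.muJ_mem_Icc hu' hu).1
  have hμv := (pow_nonneg h.c_pos.le _).trans (h.muJ_mem_Icc hv' hv).1
  have hs0 := (mul_nonneg h.c_pos.le (mul_nonneg hsu hsv)).trans hs.1
  rw [Er_of_ne_nil (List.append_ne_nil_of_left_ne_nil hu v), Er_of_ne_nil hu, Er_of_ne_nil hv]
  calc muJ p χ N (u ++ v) * sword sr (u ++ v) ^ r
      ≤ c⁻¹ * (muJ p χ N u * muJ p χ N v) * (sword sr u * sword sr v) ^ r :=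
        mul_le_mul (h.muJ_append_le huv hu hv) (Real.rpow_le_rpow hs0 hs.2 hr)
          (Real.rpow_nonneg hs0 r) (by positivity)
    _ = _ := by rw [Real.mul_rpow hsu hsv]; ring

theorem Er_append_ge (h : WeightBounds p χ sr N c) (hr : 0 ≤ r) (huv : IsPsiChain p N (u ++ v)) :
    c * c ^ r * (Er p χ sr N r u * Er p χ sr N r v) ≤ Er p χ sr N r (u ++ v) := by
  obtain ⟨hu', hv'⟩ := huv.of_append
  have hc := h.c_pos
  have hκ : c * c ^ r ≤ 1 := mul_le_one₀ h.c_le_one (by positivity)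
    (Real.rpow_le_one hc.le h.c_le_one hr)
  rcases eq_or_ne u [] with rfl | hu
  · simpa [Er_nil] using mul_le_of_le_one_left (h.Er_pos hr hv').le hκ
  rcases eq_or_ne v [] with rfl | hv
  · simpa [Er_nil] using mul_le_of_le_one_left (h.Er_pos hr hu').le hκ
  have hs := h.sword_append_mem_Icc huv hu hv
  have hsu := (pow_nonneg hc.le _).trans (h.sword_mem_Icc hu').1
  have hsv := (pow_nonneg hc.le _).trans (h.sword_mem_Icc hv').1
  rw [Er_of_ne_nil (List.append_ne_nil_of_left_ne_nil hu v), Er_of_ne_nil hu, Er_of_ne_nil hv]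
  calc c * c ^ r * (muJ p χ N u * sword sr u ^ r * (muJ p χ N v * sword sr v ^ r))
      = c * (muJ p χ N u * muJ p χ N v) * (c * (sword sr u * sword sr v)) ^ r := by
        rw [Real.mul_rpow hc.le (mul_nonneg hsu hsv), Real.mul_rpow hsu hsv]; ring
    _ ≤ _ := by
        have hμu := (pow_nonneg hc.le _).trans (h.muJ_mem_Icc hu' hu).1
        have hμv := (pow_nonneg hc.le _).trans (h.muJ_mem_Icc hv' hv).1
        have hμ := (pow_nonneg hc.le _).trans
          (h.muJ_mem_Icc huv (List.append_ne_nil_of_left_ne_nil hu v)).1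
        exact mul_le_mul (h.muJ_append_ge huv hu hv)
          (Real.rpow_le_rpow (by positivity) hs.1 hr) (by positivity) hμ

theorem le_Er_take (h : WeightBounds p χ sr N c) (hr : 0 ≤ r) (hσ : IsPsiChain p N σ) {k M : ℕ}
    (hk : σ.length - k ≤ M) : c / 2 ^ M * Er p χ sr N r σ ≤ Er p χ sr N r (σ.take k) := by
  have hsplit := h.Er_append_le hr (u := σ.take k) (v := σ.drop k)
    (by rwa [List.take_append_drop])
  rw [List.take_append_drop] at hsplit
  have hdrop : Er p χ sr N r (σ.drop k) ≤ 2 ^ M :=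
    (h.Er_le_two_pow hr (hσ.drop k)).trans
      (pow_le_pow_right₀ one_le_two (by rwa [List.length_drop]))
  have hc := h.c_pos
  have htake := (h.Er_pos hr (hσ.take k)).le
  calc c / 2 ^ M * Er p χ sr N r σ
      ≤ c / 2 ^ M * (c⁻¹ * (Er p χ sr N r (σ.take k) * 2 ^ M)) := by
        gcongr
        exact hsplit.trans (by gcongr)
    _ = Er p χ sr N r (σ.take k) := by field_simp

theorem Er_joinWith_ge (h : WeightBounds p χ sr N c) (hr : 0 ≤ r)
    (hb : IsBridge p N M bridge) (hα : IsPsiChain p N α) (hβ : IsPsiChain p N β)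
    (hαne : α ≠ []) (hβne : β ≠ []) :
    (c * c ^ r) ^ (M + 2) * (Er p χ sr N r α * Er p χ sr N r β) ≤
      Er p χ sr N r (joinWith bridge α β) := by
  have hlen := hb.length_le hα hβ hαne hβne
  have hjoin := hb.isPsiChain_joinWith hα hβ hαne hβne
  set w := bridge (α.getLastD 0) (β.headD 0)
  have hwβ := hjoin.of_append.2
  have hc := h.c_pos
  have hκ1 : c * c ^ r ≤ 1 := mul_le_one₀ h.c_le_one (by positivity)
    (Real.rpow_le_one hc.le h.c_le_one hr)
  have hEα := (h.Er_pos hr hα).le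
  have hEβ := (h.Er_pos hr hβ).le
  have hEw : (c * c ^ r) ^ M ≤ Er p χ sr N r w :=
    (pow_le_pow_of_le_one (by positivity) hκ1 hlen).trans (h.pow_le_Er hr hwβ.of_append.1)
  calc (c * c ^ r) ^ (M + 2) * (Er p χ sr N r α * Er p χ sr N r β)
      = c * c ^ r * (Er p χ sr N r α * (c * c ^ r * ((c * c ^ r) ^ M * Er p χ sr N r β))) := by
        ring
    _ ≤ c * c ^ r * (Er p χ sr N r α * (c * c ^ r * (Er p χ sr N r w * Er p χ sr N r β))) := by
        gcongr
    _ ≤ c * c ^ r * (Er p χ sr N r α * Er p χ sr N r (w ++ β)) := by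
        gcongr
        exact h.Er_append_ge hr hwβ
    _ ≤ _ := h.Er_append_ge hr hjoin

theorem le_Er_take_joinWith (h : WeightBounds p χ sr N c) (hr : 0 ≤ r)
    (hb : IsBridge p N M bridge) {n l : ℕ} (hn : n ≠ 0) (hl : l ≠ 0) (hα : α ∈ Sn p N n)
    (hβ : β ∈ Sn p N l) :
    c / 2 ^ M * (c * c ^ r) ^ (M + 2) * (Er p χ sr N r α * Er p χ sr N r β) ≤
      Er p χ sr N r ((joinWith bridge α β).take (n + l)) := by
  rw [mem_Sn_iff h.a4 hn] at hα
  rw [mem_Sn_iff h.a4 hl] at hβ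
  have hαne := List.ne_nil_of_length_pos (by omega : 0 < α.length)
  have hβne := List.ne_nil_of_length_pos (by omega : 0 < β.length)
  have hlen := hb.length_le hα.2 hβ.2 hαne hβne
  have hjoin := hb.isPsiChain_joinWith hα.2 hβ.2 hαne hβne
  have hc := h.c_pos
  rw [mul_assoc]
  refine (mul_le_mul_of_nonneg_left (h.Er_joinWith_ge hr hb hα.2 hβ.2 hαne hβne)
    (by positivity)).trans (h.le_Er_take hr hjoin ?_)
  simp only [joinWith, List.length_append, hα.1, hβ.1]
  omega

theorem le_sum_Sn_add (h : WeightBounds p χ sr N c) (hr : 0 ≤ r) (hs : 0 ≤ s)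
    (hb : IsBridge p N M bridge) {n l : ℕ} (hn : n ≠ 0) (hl : l ≠ 0) :
    (c / 2 ^ M * (c * c ^ r) ^ (M + 2)) ^ s / (shortWords N M).card *
        (∑ σ ∈ Sn p N n, Er p χ sr N r σ ^ s) * (∑ σ ∈ Sn p N l, Er p χ sr N r σ ^ s) ≤
      ∑ σ ∈ Sn p N (n + l), Er p χ sr N r σ ^ s := by
  have hc := h.c_pos
  have hκ : 0 ≤ c / 2 ^ M * (c * c ^ r) ^ (M + 2) := by positivity
  set κ := c / 2 ^ M * (c * c ^ r) ^ (M + 2)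
  rw [mul_assoc, div_mul_eq_mul_div, div_le_iff₀ (by exact_mod_cast shortWords_card_pos N M),
    Finset.sum_mul_sum, ← Finset.sum_product', Finset.mul_sum, mul_comm]
  calc ∑ q ∈ Sn p N n ×ˢ Sn p N l, κ ^ s * (Er p χ sr N r q.1 ^ s * Er p χ sr N r q.2 ^ s)
      ≤ ∑ q ∈ Sn p N n ×ˢ Sn p N l,
          Er p χ sr N r ((joinWith bridge q.1 q.2).take (n + l)) ^ s := by
        refine Finset.sum_le_sum fun q hq => ?_
        obtain ⟨hα, hβ⟩ := Finset.mem_product.1 hq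
        exact Real.mul_rpow_le_rpow_of_mul_le hκ (h.Er_nonneg_of_mem_Sn hr hn hα)
          (h.Er_nonneg_of_mem_Sn hr hl hβ) hs (h.le_Er_take_joinWith hr hb hn hl hα hβ)
    _ ≤ (shortWords N M).card * ∑ σ ∈ Sn p N (n + l), Er p χ sr N r σ ^ s :=
        Finset.sum_comp_le_mul_sum
          (fun q hq => hb.take_joinWith_mem_Sn h.a4 hn hl (Finset.mem_product.1 hq).1
            (Finset.mem_product.1 hq).2)
          (fun y _ => hb.card_filter_take_joinWith_le h.a4 hn hl y)
          (fun σ hσ => Real.rpow_nonneg (h.Er_nonneg_of_mem_Sn hr (by omega) hσ) s)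

theorem sum_Sn_add_le (h : WeightBounds p χ sr N c) (hr : 0 ≤ r) (hs : 0 ≤ s) {n l : ℕ}
    (hn : n ≠ 0) (hl : l ≠ 0) :
    ∑ σ ∈ Sn p N (n + l), Er p χ sr N r σ ^ s ≤
      c⁻¹ ^ s * (∑ σ ∈ Sn p N n, Er p χ sr N r σ ^ s) *
        (∑ σ ∈ Sn p N l, Er p χ sr N r σ ^ s) := by
  have hc := h.c_pos
  have hsplit : ∀ σ ∈ Sn p N (n + l), σ.take n ∈ Sn p N n ∧ σ.drop n ∈ Sn p N l := by
    intro σ hσ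
    obtain ⟨hlen, hσ⟩ := (mem_Sn_iff h.a4 (by omega)).1 hσ
    exact ⟨(mem_Sn_iff h.a4 hn).2 ⟨by simp [hlen], hσ.take n⟩,
      (mem_Sn_iff h.a4 hl).2 ⟨by simp [hlen], hσ.drop n⟩⟩
  set g : List ℕ × List ℕ → ℝ :=
    fun q => c⁻¹ ^ s * (Er p χ sr N r q.1 ^ s * Er p χ sr N r q.2 ^ s)
  rw [mul_assoc, Finset.sum_mul_sum, ← Finset.sum_product', Finset.mul_sum]
  calc ∑ σ ∈ Sn p N (n + l), Er p χ sr N r σ ^ s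
      ≤ ∑ σ ∈ Sn p N (n + l), g (σ.take n, σ.drop n) := by
        refine Finset.sum_le_sum fun σ hσ => ?_
        obtain ⟨h₁, h₂⟩ := hsplit σ hσ
        have hE₁ := h.Er_nonneg_of_mem_Sn hr hn h₁
        have hE₂ := h.Er_nonneg_of_mem_Sn hr hl h₂
        have hσ' := ((mem_Sn_iff h.a4 (by omega)).1 hσ).2
        calc Er p χ sr N r σ ^ s
            ≤ (c⁻¹ * (Er p χ sr N r (σ.take n) * Er p χ sr N r (σ.drop n))) ^ s :=
              Real.rpow_le_rpow (h.Er_pos hr hσ').le (by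
                simpa using h.Er_append_le hr (u := σ.take n) (v := σ.drop n)
                  (by simpa using hσ')) hs
          _ = g (σ.take n, σ.drop n) := by
              rw [Real.mul_rpow (by positivity) (mul_nonneg hE₁ hE₂), Real.mul_rpow hE₁ hE₂]
    _ ≤ ((1 : ℕ) : ℝ) * ∑ q ∈ Sn p N n ×ˢ Sn p N l, g q := by
        refine Finset.sum_comp_le_mul_sum (fun σ hσ => Finset.mem_product.2 (hsplit σ hσ))
          (fun _ _ => Finset.card_le_one.2 fun σ₁ hσ₁ σ₂ hσ₂ => ?_) (fun q hq => ?_)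
        · have e := (Finset.mem_filter.1 hσ₁).2.trans (Finset.mem_filter.1 hσ₂).2.symm
          rw [Prod.mk.injEq] at e
          rw [← List.take_append_drop n σ₁, ← List.take_append_drop n σ₂, e.1, e.2]
        · obtain ⟨h₁, h₂⟩ := Finset.mem_product.1 hq
          have := h.Er_nonneg_of_mem_Sn hr hn h₁
          have := h.Er_nonneg_of_mem_Sn hr hl h₂
          positivity
    _ = _ := by rw [Nat.cast_one, one_mul]

end WeightBounds

theorem stmt18_general
    (N q : ℕ) (hN : 2 ≤ N) (r : ℝ) (hr : 0 < r)
    (p : ℕ → ℕ → ℝ) (χ : ℕ → ℝ)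
    (hp0 : ∀ i j, 0 ≤ p i j)
    (hpsupp : ∀ i j, 0 < p i j → i ∈ Finset.Icc 1 (2 * N) ∧ j ∈ Finset.Icc 1 (2 * N))
    (hpsum : ∀ i ∈ Finset.Icc 1 (2 * N), ∑ j ∈ Finset.Icc 1 (2 * N), p i j = 1)
    (hχpos : ∀ i ∈ Finset.Icc 1 (2 * N), 0 < χ i)
    (hχsum : ∑ i ∈ Finset.Icc 1 (2 * N), χ i = 1)
    (sr : ℕ → ℕ → ℝ)
    (T : ℕ → ℕ → EuclideanSpace ℝ (Fin q) → EuclideanSpace ℝ (Fin q))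
    (hsim : ∀ i ∈ Finset.Icc 1 N, ∀ j ∈ Finset.Icc 1 N, isSword p N [i, j] →
      0 < sr i j ∧ sr i j < 1 ∧ ∀ x y, dist (T i j x) (T i j y) = sr i j * dist x y)
    (hA4 : A4 p N) (hA5 : A5 p N)
    (s : ℝ) (hs : 0 < s) :
    ∃ g1 g2 : ℝ, 0 < g1 ∧ 0 < g2 ∧ ∀ n l : ℕ, 1 ≤ n → 1 ≤ l →
      g1 * (∑ σ ∈ Sn p N n, Er p χ sr N r σ ^ s) *
            (∑ σ ∈ Sn p N l, Er p χ sr N r σ ^ s) ≤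
          (∑ σ ∈ Sn p N (n + l), Er p χ sr N r σ ^ s) ∧
        (∑ σ ∈ Sn p N (n + l), Er p χ sr N r σ ^ s) ≤
          g2 * (∑ σ ∈ Sn p N n, Er p χ sr N r σ ^ s) *
            (∑ σ ∈ Sn p N l, Er p χ sr N r σ ^ s) := by
  obtain ⟨c, h⟩ := exists_weightBounds (by omega) hp0 hpsupp hpsum hχpos hχsum
    (fun i hi j hj hij => ⟨(hsim i hi j hj hij).1, (hsim i hi j hj hij).2.1.le⟩) hA4
  obtain ⟨M, bridge, hb⟩ := exists_isBridge hA5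
  have hc := h.c_pos
  refine ⟨_, _, div_pos (by positivity) (by exact_mod_cast shortWords_card_pos N M),
    Real.rpow_pos_of_pos (inv_pos.2 hc) s, fun n l hn hl =>
      ⟨h.le_sum_Sn_add hr.le hs.le hb (by omega) (by omega),
        h.sum_Sn_add_le hr.le hs.le (by omega) (by omega)⟩⟩

/-- **Lemma 5.2.** Assume (A2), (A4) and (A5). For every `s > 0` there exist
`g₁(s), g₂(s) > 0` with `g₁ T_n(s) T_l(s) ≤ T_{n+l}(s) ≤ g₂ T_n(s) T_l(s)` for all
`n, l ∈ ℕ`, where `T_n(s) = Σ_{σ ∈ 𝒮_n} ℰ_r(σ)^s`. -/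
theorem stmt18
    (N q : ℕ) (hN : 2 ≤ N) (hq : 1 ≤ q) (r : ℝ) (hr : 0 < r)
    (p : ℕ → ℕ → ℝ) (χ : ℕ → ℝ)
    (hp0 : ∀ i j, 0 ≤ p i j)
    (hpsupp : ∀ i j, 0 < p i j → i ∈ Finset.Icc 1 (2 * N) ∧ j ∈ Finset.Icc 1 (2 * N))
    (hpsum : ∀ i ∈ Finset.Icc 1 (2 * N), ∑ j ∈ Finset.Icc 1 (2 * N), p i j = 1)
    (hχpos : ∀ i ∈ Finset.Icc 1 (2 * N), 0 < χ i)
    (hχsum : ∑ i ∈ Finset.Icc 1 (2 * N), χ i = 1)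
    (sr : ℕ → ℕ → ℝ)
    (T : ℕ → ℕ → EuclideanSpace ℝ (Fin q) → EuclideanSpace ℝ (Fin q))
    (J : ℕ → Set (EuclideanSpace ℝ (Fin q)))
    (hTinv : ∀ i ∈ Finset.Icc 1 N, ∀ j ∈ Finset.Icc 1 N, ∀ a b : ℕ,
      (a = i ∨ a = i + N) → (b = j ∨ b = j + N) → 0 < p a b →
      T a b = T i j ∧ sr a b = sr i j)
    (hsim : ∀ i ∈ Finset.Icc 1 N, ∀ j ∈ Finset.Icc 1 N, isSword p N [i, j] →
      0 < sr i j ∧ sr i j < 1 ∧ ∀ x y, dist (T i j x) (T i j y) = sr i j * dist x y)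
    (hJcpt : ∀ i ∈ Finset.Icc 1 N,
      IsCompact (J i) ∧ (J i).Nonempty ∧ closure (interior (J i)) = J i ∧
        Metric.diam (J i) = 1)
    (hJdisj : ∀ i ∈ Finset.Icc 1 N, ∀ j ∈ Finset.Icc 1 N, i ≠ j → Disjoint (J i) (J j))
    (hJplus : ∀ i ∈ Finset.Icc 1 N, J (i + N) = J i)
    (hnest : ∀ i ∈ Finset.Icc 1 N, ∀ j ∈ Finset.Icc 1 N, isSword p N [i, j] →
      T i j '' J j ⊆ J i)
    (hTdisj : ∀ i ∈ Finset.Icc 1 N, ∀ j ∈ Finset.Icc 1 N, ∀ l ∈ Finset.Icc 1 N,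
      isSword p N [i, j] → isSword p N [i, l] → j ≠ l →
      Disjoint (T i j '' J j) (T i l '' J l))
    (hA2 : A2 p N) (hA4 : A4 p N) (hA5 : A5 p N)
    (s : ℝ) (hs : 0 < s) :
    ∃ g1 g2 : ℝ, 0 < g1 ∧ 0 < g2 ∧ ∀ n l : ℕ, 1 ≤ n → 1 ≤ l →
      g1 * (∑ σ ∈ Sn p N n, Er p χ sr N r σ ^ s) *
            (∑ σ ∈ Sn p N l, Er p χ sr N r σ ^ s) ≤
          (∑ σ ∈ Sn p N (n + l), Er p χ sr N r σ ^ s) ∧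
        (∑ σ ∈ Sn p N (n + l), Er p χ sr N r σ ^ s) ≤
          g2 * (∑ σ ∈ Sn p N n, Er p χ sr N r σ ^ s) *
            (∑ σ ∈ Sn p N l, Er p χ sr N r σ ^ s) :=
  stmt18_general N q hN r hr p χ hp0 hpsupp hpsum hχpos hχsum sr T hsim hA4 hA5 s hs

end MTM

end
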